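/- Let f ∈ ℝ[x, y] be a homogeneous polynomial of degree d that splits as a product of d pairwise non-proportional real linear forms (so f has exactly d distinct real projective roots). Then f has exactly d real eigenvectors: the set {[v] ∈ ℝℙ¹ : v ≠ 0 and ∇f(v) = λv for some λ ∈ ℝ} has exactly d elements. -/

import Mathlib

open MvPolynomial

/-- The gradient of a polynomial `f ∈ ℝ[x₁,…,xₙ]` at a point `v ∈ ℝⁿ`. -/
noncomputable def grad {n : ℕ} (f : MvPolynomial (Fin n) ℝ) (v : Fin n → ℝ) : Fin n → ℝ :=
  fun i => eval v (pderiv i f)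

/-- The set of real eigenvectors of `f`, counted projectively. -/
def eigSet {n : ℕ} (f : MvPolynomial (Fin n) ℝ) :
    Set (Projectivization ℝ (Fin n → ℝ)) :=
  {p | ∃ (v : Fin n → ℝ) (hv : v ≠ 0) (lam : ℝ),
    p = Projectivization.mk ℝ v hv ∧ grad f v = lam • v}

/-!
Put `h θ = f (cos θ, sin θ)` and let `E = x ∂f/∂y - y ∂f/∂x` be the angular derivative, so that
`h' θ = E (cos θ, sin θ)`; a nonzero `v` is an eigenvector exactly when `E v = 0`. Each linear
factor of `f` vanishes at one angle in every half-open interval of length `π`, so starting from a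
root `α` of `h` we get `d + 1` zeros of `h` in `[α, α + π]`, and Rolle's theorem gives `d` zeros of
`h'` in `(α, α + π)`: these are `d` distinct eigenvectors. Conversely `E` is a binary form of
degree `d` which does not vanish at the roots of `f`; restricted to an affine line avoiding such a
root it is a nonzero polynomial of degree at most `d`, so `E` has at most `d` projective zeros.
-/

open Set Real

namespace MvPolynomial

theorem IsHomogeneous.eval_smul {σ R : Type*} [CommSemiring R] {φ : MvPolynomial σ R} {n : ℕ}
    (hφ : φ.IsHomogeneous n) (c : R) (v : σ → R) : eval (c • v) φ = c ^ n * eval v φ := by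
  rw [eval_eq, eval_eq, Finset.mul_sum]
  refine Finset.sum_congr rfl fun m hm => ?_
  have hdeg : ∑ i ∈ m.support, m i = n := by
    simpa [Finsupp.weight_apply, Finsupp.sum] using hφ (mem_support_iff.mp hm)
  simp only [Pi.smul_apply, smul_eq_mul, mul_pow, Finset.prod_mul_distrib,
    Finset.prod_pow_eq_pow_sum, hdeg]
  ring

theorem hasDerivAt_eval_comp {σ : Type*} [Fintype σ] (P : MvPolynomial σ ℝ) {γ : ℝ → σ → ℝ}
    {γ' : σ → ℝ} {t : ℝ} (hγ : ∀ i, HasDerivAt (fun s => γ s i) (γ' i) t) :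
    HasDerivAt (fun s => eval (γ s) P) (∑ i, eval (γ t) (pderiv i P) * γ' i) t := by
  classical
  induction P using MvPolynomial.induction_on with
  | C a => simpa using hasDerivAt_const t a
  | add p q hp hq => simpa [add_mul, Finset.sum_add_distrib] using hp.fun_add hq
  | mul_X p i hp =>
    simp only [eval_mul, eval_X]
    refine (hp.fun_mul (hγ i)).congr_deriv ?_
    simp only [Derivation.leibniz, pderiv_X, smul_eq_mul, map_add, map_mul, eval_X,
      Pi.single_apply, apply_ite, map_zero, mul_one, mul_zero, add_mul, ite_mul, zero_mul,
      Finset.sum_add_distrib, Finset.sum_ite_eq, Finset.mem_univ, if_true, Finset.sum_mul, add_comm,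
      add_right_inj]
    exact Finset.sum_congr rfl fun _ _ => by ring

theorem exists_natDegree_le_eval_eq_eval_line {n : ℕ} (E : MvPolynomial (Fin n) ℝ)
    (u w : Fin n → ℝ) :
    ∃ Q : Polynomial ℝ, Q.natDegree ≤ E.totalDegree ∧ ∀ t, Q.eval t = eval (u + t • w) E := by
  let g : Fin n → Polynomial ℝ := fun i => Polynomial.C (w i) * Polynomial.X + Polynomial.C (u i)
  refine ⟨aeval g E, ?_, fun t => ?_⟩
  · simpa using aeval_natDegree_le E le_rfl g fun i => Polynomial.natDegree_linear_le
  · rw [← Polynomial.coe_aeval_eq_eval, ← AlgHom.comp_apply, comp_aeval]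
    have hline : (fun i => u i + w i * t) = u + t • w := by
      ext i
      simp [mul_comm]
    simp [g, add_comm, hline]

end MvPolynomial

noncomputable def angularDeriv (f : MvPolynomial (Fin 2) ℝ) : MvPolynomial (Fin 2) ℝ :=
  X 0 * pderiv 1 f - X 1 * pderiv 0 f

theorem MvPolynomial.IsHomogeneous.angularDeriv {f : MvPolynomial (Fin 2) ℝ} {d : ℕ}
    (hf : f.IsHomogeneous d) (hd : 1 ≤ d) : (_root_.angularDeriv f).IsHomogeneous d := by
  rw [← Nat.add_sub_cancel' hd]
  exact ((isHomogeneous_X ℝ 0).mul hf.pderiv).sub ((isHomogeneous_X ℝ 1).mul hf.pderiv)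

def projZeroSet {n : ℕ} (E : MvPolynomial (Fin n) ℝ) : Set (Projectivization ℝ (Fin n → ℝ)) :=
  {p | ∃ (v : Fin n → ℝ) (hv : v ≠ 0), p = Projectivization.mk ℝ v hv ∧ eval v E = 0}

theorem exists_eq_smul_iff_cross_eq_zero {g v : Fin 2 → ℝ} (hv : v ≠ 0) :
    (∃ c : ℝ, g = c • v) ↔ v 0 * g 1 - v 1 * g 0 = 0 := by
  constructor
  · rintro ⟨c, rfl⟩
    simp only [Pi.smul_apply, smul_eq_mul]
    ring
  · intro h
    by_cases h0 : v 0 = 0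
    · have h1 : v 1 ≠ 0 := fun h1 => hv (funext fun i => by fin_cases i <;> assumption)
      have hg0 : g 0 = 0 := by simpa [h0, h1] using h
      refine ⟨g 1 / v 1, funext fun i => ?_⟩
      fin_cases i <;> simp [h0, h1, hg0]
    · refine ⟨g 0 / v 0, funext fun i => ?_⟩
      fin_cases i
      · simp [h0]
      · change g 1 = g 0 / v 0 * v 1
        field_simp
        linarith

theorem eigSet_eq_projZeroSet (f : MvPolynomial (Fin 2) ℝ) :
    eigSet f = projZeroSet (angularDeriv f) := by
  ext p
  constructor
  · rintro ⟨v, hv, c, rfl, hc⟩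
    refine ⟨v, hv, rfl, ?_⟩
    simpa [angularDeriv, grad] using (exists_eq_smul_iff_cross_eq_zero hv).mp ⟨c, hc⟩
  · rintro ⟨v, hv, rfl, hE⟩
    obtain ⟨c, hc⟩ := (exists_eq_smul_iff_cross_eq_zero (g := grad f v) hv).mpr
      (by simpa [angularDeriv, grad] using hE)
    exact ⟨v, hv, c, rfl, hc⟩

noncomputable def circ (θ : ℝ) : Fin 2 → ℝ := ![cos θ, sin θ]

theorem circ_ne_zero (θ : ℝ) : circ θ ≠ 0 := fun h => by
  have h0 : cos θ = 0 := by simpa [circ] using congrFun h 0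
  have h1 : sin θ = 0 := by simpa [circ] using congrFun h 1
  simpa [h0, h1] using sin_sq_add_cos_sq θ

noncomputable def projCirc (θ : ℝ) : Projectivization ℝ (Fin 2 → ℝ) :=
  Projectivization.mk ℝ (circ θ) (circ_ne_zero θ)

theorem hasDerivAt_eval_circ (P : MvPolynomial (Fin 2) ℝ) (θ : ℝ) :
    HasDerivAt (fun θ => eval (circ θ) P) (eval (circ θ) (angularDeriv P)) θ := by
  have hcirc : ∀ i, HasDerivAt (fun θ => circ θ i) (![-sin θ, cos θ] i) θ := by
    intro i
    fin_cases i
    · simpa [circ] using hasDerivAt_cos θ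
    · simpa [circ] using hasDerivAt_sin θ
  refine (hasDerivAt_eval_comp P hcirc).congr_deriv ?_
  simp only [angularDeriv, circ, Fin.sum_univ_two, map_sub, map_mul, eval_X,
    Matrix.cons_val_zero, Matrix.cons_val_one, Matrix.cons_val_fin_one]
  ring

theorem projCirc_periodic : Function.Periodic projCirc π := fun θ =>
  (Projectivization.mk_eq_mk_iff' ℝ _ _ _ _).mpr ⟨-1, by ext i; fin_cases i <;> simp [circ]⟩

theorem projCirc_surjective : Function.Surjective projCirc := by
  intro p
  induction p using Projectivization.ind with
  | h v hv =>
  let z : ℂ := ⟨v 0, v 1⟩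
  have hz : z ≠ 0 := fun hz => hv <| by
    ext i
    fin_cases i
    · exact congrArg Complex.re hz
    · exact congrArg Complex.im hz
  refine ⟨z.arg, (Projectivization.mk_eq_mk_iff' ℝ _ _ _ _).mpr ⟨‖z‖⁻¹, ?_⟩⟩
  have hn : ‖z‖ ≠ 0 := norm_ne_zero_iff.mpr hz
  ext i
  fin_cases i
  · change ‖z‖⁻¹ * z.re = cos z.arg
    rw [← Complex.norm_mul_cos_arg z, inv_mul_cancel_left₀ hn]
  · change ‖z‖⁻¹ * z.im = sin z.arg
    rw [← Complex.norm_mul_sin_arg z, inv_mul_cancel_left₀ hn]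

theorem injOn_projCirc (α : ℝ) : InjOn projCirc (Ico α (α + π)) := by
  intro θ hθ θ' hθ' h
  obtain ⟨c, hc⟩ := (Projectivization.mk_eq_mk_iff' ℝ _ _ _ _).mp h
  have hsin : sin (θ - θ') = 0 := by
    have h0 := congrFun hc 0
    have h1 := congrFun hc 1
    simp only [circ, Pi.smul_apply, smul_eq_mul, Matrix.cons_val_zero, Matrix.cons_val_one] at h0 h1
    rw [sin_sub, ← h0, ← h1]
    ring
  have hdiff : θ - θ' = 0 :=
    (sin_eq_zero_iff_of_lt_of_lt (by linarith [hθ.1, hθ'.2]) (by linarith [hθ.2, hθ'.1])).mp hsin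
  linarith

theorem exists_mem_Ico_projCirc_eq (α : ℝ) (p : Projectivization ℝ (Fin 2 → ℝ)) :
    ∃ θ ∈ Ico α (α + π), projCirc θ = p := by
  obtain ⟨θ₀, rfl⟩ := projCirc_surjective p
  obtain ⟨θ, hθ, h⟩ := projCirc_periodic.exists_mem_Ico pi_pos θ₀ α
  exact ⟨θ, hθ, h.symm⟩

theorem card_le_card_add_one_of_hasDerivAt {g g' : ℝ → ℝ} (hg : ∀ x, HasDerivAt g (g' x) x)
    {a b : ℝ} {s t : Finset ℝ} (hs : ↑s ⊆ Icc a b) (hs0 : ∀ x ∈ s, g x = 0)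
    (ht : ∀ x ∈ Ioo a b, g' x = 0 → x ∈ t) : s.card ≤ t.card + 1 := by
  refine Finset.card_le_of_interleaved fun x hx y hy hxy _ => ?_
  obtain ⟨z, hz, hz0⟩ := exists_hasDerivAt_eq_zero hxy
    (fun u _ => (hg u).continuousAt.continuousWithinAt) ((hs0 x hx).trans (hs0 y hy).symm)
    fun u _ => hg u
  exact ⟨z, ht z ⟨(hs hx).1.trans_lt hz.1, hz.2.trans_le (hs hy).2⟩ hz0, hz⟩

theorem card_le_ncard_projZeroSet_angularDeriv_add_one {f : MvPolynomial (Fin 2) ℝ} {α : ℝ}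
    {s : Finset ℝ} (hs : ↑s ⊆ Icc α (α + π)) (hf : ∀ θ ∈ s, eval (circ θ) f = 0)
    (hZ : (projZeroSet (angularDeriv f)).Finite) :
    s.card ≤ (projZeroSet (angularDeriv f)).ncard + 1 := by
  set T := {θ ∈ Ioo α (α + π) | eval (circ θ) (angularDeriv f) = 0}
  have hinj : InjOn projCirc T := (injOn_projCirc α).mono fun θ hθ => Ioo_subset_Ico_self hθ.1
  have hmaps : MapsTo projCirc T (projZeroSet (angularDeriv f)) :=
    fun θ hθ => ⟨circ θ, circ_ne_zero θ, rfl, hθ.2⟩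
  have hT : T.Finite := Finite.of_finite_image (hZ.subset hmaps.image_subset) hinj
  calc s.card ≤ hT.toFinset.card + 1 :=
        card_le_card_add_one_of_hasDerivAt (hasDerivAt_eval_circ f) hs hf
          fun θ hθ h0 => hT.mem_toFinset.mpr ⟨hθ, h0⟩
    _ ≤ (projZeroSet (angularDeriv f)).ncard + 1 := by
        rw [← ncard_eq_toFinset_card T hT]
        gcongr
        exact ncard_le_ncard_of_injOn projCirc hmaps hinj hZ

theorem smul_eq_smul_rot_add_smul (w v : Fin 2 → ℝ) :
    (w 0 ^ 2 + w 1 ^ 2) • v =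
      (v 1 * w 0 - v 0 * w 1) • ![-w 1, w 0] + (v 0 * w 0 + v 1 * w 1) • w := by
  ext i
  fin_cases i <;>
    simp only [Fin.zero_eta, Fin.mk_one, Pi.add_apply, Pi.smul_apply, smul_eq_mul,
      Matrix.cons_val_zero, Matrix.cons_val_one, Matrix.cons_val_fin_one] <;>
    ring

theorem rot_add_smul_ne_zero {w : Fin 2 → ℝ} (hw : w ≠ 0) (t : ℝ) : ![-w 1, w 0] + t • w ≠ 0 := by
  intro h
  have h0 : -w 1 + t * w 0 = 0 := by simpa using congrFun h 0
  have h1 : w 0 + t * w 1 = 0 := by simpa using congrFun h 1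
  have hw0 : w 0 = 0 := by
    have : w 0 * (1 + t ^ 2) = 0 := by linear_combination h1 + t * h0
    exact (mul_eq_zero.mp this).resolve_right (by positivity)
  have hw1 : w 1 = 0 := by simpa [hw0] using h0
  exact hw (by ext i; fin_cases i <;> simp [hw0, hw1])

theorem exists_eval_rot_add_smul_eq_zero {E : MvPolynomial (Fin 2) ℝ} {d : ℕ}
    (hE : E.IsHomogeneous d) {w : Fin 2 → ℝ} (hw : w ≠ 0) (hEw : eval w E ≠ 0)
    {v : Fin 2 → ℝ} (hv : v ≠ 0) (hEv : eval v E = 0) :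
    ∃ t c : ℝ, ![-w 1, w 0] + t • w = c • v ∧ eval (![-w 1, w 0] + t • w) E = 0 := by
  set N := w 0 ^ 2 + w 1 ^ 2
  set a := v 1 * w 0 - v 0 * w 1
  set b := v 0 * w 0 + v 1 * w 1
  have hdecomp : N • v = a • ![-w 1, w 0] + b • w := smul_eq_smul_rot_add_smul w v
  have hN : N ≠ 0 := fun hN => hw <| by
    ext i
    fin_cases i <;> simp <;> nlinarith [sq_nonneg (w 0), sq_nonneg (w 1)]
  have ha : a ≠ 0 := by
    intro ha
    rw [ha, zero_smul, zero_add] at hdecomp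
    have hb : b ^ d * eval w E = 0 := by
      rw [← hE.eval_smul, ← hdecomp, hE.eval_smul, hEv, mul_zero]
    rw [eq_zero_of_pow_eq_zero ((mul_eq_zero.mp hb).resolve_right hEw), zero_smul] at hdecomp
    exact hv ((smul_eq_zero.mp hdecomp).resolve_left hN)
  have hline : ![-w 1, w 0] + (b / a) • w = (N / a) • v := by
    symm
    rw [div_eq_inv_mul, mul_smul, hdecomp, smul_add, smul_smul, smul_smul, inv_mul_cancel₀ ha,
      one_smul, div_eq_inv_mul]
  exact ⟨b / a, _, hline, by rw [hline, hE.eval_smul, hEv, mul_zero]⟩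

theorem finite_projZeroSet_and_ncard_le {E : MvPolynomial (Fin 2) ℝ} {d : ℕ}
    (hE : E.IsHomogeneous d) {w : Fin 2 → ℝ} (hw : w ≠ 0) (hEw : eval w E ≠ 0) :
    (projZeroSet E).Finite ∧ (projZeroSet E).ncard ≤ d := by
  obtain ⟨Q, hQdeg, hQ⟩ := exists_natDegree_le_eval_eq_eval_line E ![-w 1, w 0] w
  have hQ0 : Q ≠ 0 := by
    -- `E (s • u + w) = s ^ d * Q (1 / s)` vanishes for `s ≠ 0`, hence at `s = 0` by continuity.
    rintro rfl
    have hcont : Continuous fun s : ℝ => eval (s • ![-w 1, w 0] + w) E :=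
      (continuous_eval E).comp (by fun_prop)
    have hvanish := hcont.ext_on (dense_compl_singleton 0) continuous_const fun s (hs : s ≠ 0) => by
      simp only
      rw [show s • ![-w 1, w 0] + w = s • (![-w 1, w 0] + s⁻¹ • w) by
        rw [smul_add, smul_smul, mul_inv_cancel₀ hs, one_smul], hE.eval_smul, ← hQ,
        Polynomial.eval_zero, mul_zero]
    exact hEw (by simpa using congrFun hvanish 0)
  let line (t : ℝ) : Projectivization ℝ (Fin 2 → ℝ) :=
    Projectivization.mk ℝ (![-w 1, w 0] + t • w) (rot_add_smul_ne_zero hw t)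
  have hsub : projZeroSet E ⊆ line '' ↑Q.roots.toFinset := by
    rintro _ ⟨v, hv, rfl, hEv⟩
    obtain ⟨t, c, hline, ht⟩ := exists_eval_rot_add_smul_eq_zero hE hw hEw hv hEv
    exact ⟨t, by simpa [hQ0, hQ] using ht,
      (Projectivization.mk_eq_mk_iff' ℝ _ _ _ _).mpr ⟨c, hline.symm⟩⟩
  have hfin : (line '' ↑Q.roots.toFinset).Finite := (Finset.finite_toSet _).image line
  refine ⟨hfin.subset hsub, ?_⟩
  calc (projZeroSet E).ncard ≤ (line '' ↑Q.roots.toFinset).ncard := ncard_le_ncard hsub hfin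
    _ ≤ Q.roots.toFinset.card :=
        (ncard_image_le (Finset.finite_toSet _)).trans (ncard_coe_finset _).le
    _ ≤ Q.natDegree := (Multiset.toFinset_card_le _).trans (Polynomial.card_roots' Q)
    _ ≤ d := hQdeg.trans hE.totalDegree_le

noncomputable def linForm (l : ℝ × ℝ) : MvPolynomial (Fin 2) ℝ := C l.1 * X 0 + C l.2 * X 1

def rootVec (l : ℝ × ℝ) : Fin 2 → ℝ := ![-l.2, l.1]

@[simp]
theorem eval_linForm (l : ℝ × ℝ) (v : Fin 2 → ℝ) : eval v (linForm l) = l.1 * v 0 + l.2 * v 1 := by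
  simp [linForm]

theorem rootVec_ne_zero {l : ℝ × ℝ} (hl : l ≠ 0) : rootVec l ≠ 0 := fun h => hl <| by
  ext
  · simpa [rootVec] using congrFun h 1
  · simpa [rootVec] using congrFun h 0

theorem eval_linForm_eq_zero_of_mk_eq_mk_rootVec {l : ℝ × ℝ} (hl : rootVec l ≠ 0)
    {v : Fin 2 → ℝ} (hv : v ≠ 0)
    (h : Projectivization.mk ℝ v hv = Projectivization.mk ℝ (rootVec l) hl) :
    eval v (linForm l) = 0 := by
  obtain ⟨c, rfl⟩ := (Projectivization.mk_eq_mk_iff' ℝ _ _ _ _).mp h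
  simp only [eval_linForm, rootVec, Pi.smul_apply, smul_eq_mul, Matrix.cons_val_zero,
    Matrix.cons_val_one, Matrix.cons_val_fin_one]
  ring

theorem cross_eq_zero_of_mk_rootVec_eq {l l' : ℝ × ℝ} (hl : rootVec l ≠ 0) (hl' : rootVec l' ≠ 0)
    (h : Projectivization.mk ℝ (rootVec l) hl = Projectivization.mk ℝ (rootVec l') hl') :
    l.1 * l'.2 - l.2 * l'.1 = 0 := by
  obtain ⟨c, hc⟩ := (Projectivization.mk_eq_mk_iff' ℝ _ _ _ _).mp h
  have h0 : -(c * l'.2) = -l.2 := by simpa [rootVec] using congrFun hc 0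
  have h1 : c * l'.1 = l.1 := by simpa [rootVec] using congrFun hc 1
  rw [← h1, ← neg_inj.mp h0]
  ring

theorem isHomogeneous_prod_linForm {d : ℕ} (L : Fin d → ℝ × ℝ) :
    (∏ i, linForm (L i)).IsHomogeneous d := by
  simpa using IsHomogeneous.prod Finset.univ (fun i => linForm (L i)) (fun _ => 1)
    fun i _ => (isHomogeneous_C_mul_X _ 0).add (isHomogeneous_C_mul_X _ 1)

theorem eval_rootVec_angularDeriv_linForm_mul (l : ℝ × ℝ) (g : MvPolynomial (Fin 2) ℝ) :
    eval (rootVec l) (angularDeriv (linForm l * g)) =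
      -(l.1 ^ 2 + l.2 ^ 2) * eval (rootVec l) g := by
  simp only [angularDeriv, linForm, rootVec, Derivation.leibniz, pderiv_X, derivation_C,
    smul_eq_mul, map_add, map_sub, map_mul, map_zero, map_one, eval_X, eval_C, Pi.single_eq_same,
    Pi.single_eq_of_ne zero_ne_one, Pi.single_eq_of_ne one_ne_zero, Matrix.cons_val_zero,
    Matrix.cons_val_one, Matrix.cons_val_fin_one]
  ring

theorem eval_rootVec_angularDeriv_prod_linForm_ne_zero {d : ℕ} {L : Fin d → ℝ × ℝ}
    (hL : ∀ i, L i ≠ 0) (hprop : ∀ i j, i ≠ j → (L i).1 * (L j).2 - (L i).2 * (L j).1 ≠ 0)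
    (j : Fin d) : eval (rootVec (L j)) (angularDeriv (∏ i, linForm (L i))) ≠ 0 := by
  classical
  rw [← Finset.mul_prod_erase _ _ (Finset.mem_univ j), eval_rootVec_angularDeriv_linForm_mul,
    eval_prod]
  refine mul_ne_zero ?_ (Finset.prod_ne_zero_iff.mpr fun i hi => ?_)
  · have : (L j).1 ^ 2 + (L j).2 ^ 2 ≠ 0 := fun h => hL j <| by
      ext <;> simp <;> nlinarith [sq_nonneg (L j).1, sq_nonneg (L j).2]
    exact neg_ne_zero.mpr this
  · have := hprop i j (Finset.ne_of_mem_erase hi)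
    simp only [eval_linForm, rootVec, Matrix.cons_val_zero, Matrix.cons_val_one]
    contrapose! this
    linarith

theorem exists_finset_zeros_circ_prod_linForm {d : ℕ} (hd : 1 ≤ d) {L : Fin d → ℝ × ℝ}
    (hL : ∀ i, L i ≠ 0) (hprop : ∀ i j, i ≠ j → (L i).1 * (L j).2 - (L i).2 * (L j).1 ≠ 0) :
    ∃ α : ℝ, ∃ s : Finset ℝ, s.card = d + 1 ∧ ↑s ⊆ Icc α (α + π) ∧
      ∀ θ ∈ s, eval (circ θ) (∏ i, linForm (L i)) = 0 := by
  classical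
  let P (i : Fin d) := Projectivization.mk ℝ (rootVec (L i)) (rootVec_ne_zero (hL i))
  have hzero : ∀ θ i, projCirc θ = P i → eval (circ θ) (∏ i, linForm (L i)) = 0 :=
    fun θ i h => by
      rw [eval_prod]
      exact Finset.prod_eq_zero (Finset.mem_univ i) (eval_linForm_eq_zero_of_mk_eq_mk_rootVec _ _ h)
  obtain ⟨α, hα⟩ := projCirc_surjective (P ⟨0, hd⟩)
  choose θ hθ hθP using fun i => exists_mem_Ico_projCirc_eq α (P i)
  have hθinj : Function.Injective θ := fun i j hij => by
    by_contra hne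
    exact hprop i j hne (cross_eq_zero_of_mk_rootVec_eq _ _ ((hθP i).symm.trans (hij ▸ hθP j)))
  refine ⟨α, insert (α + π) (Finset.univ.image θ), ?_, ?_, ?_⟩
  · rw [Finset.card_insert_of_notMem, Finset.card_image_of_injective _ hθinj, Finset.card_univ,
      Fintype.card_fin]
    simp only [Finset.mem_image, Finset.mem_univ, true_and, not_exists]
    exact fun i => (hθ i).2.ne
  · simp only [Finset.coe_insert, Finset.coe_image, Finset.coe_univ, image_univ, insert_subset_iff]
    refine ⟨⟨by linarith [pi_pos], le_rfl⟩, ?_⟩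
    rintro _ ⟨i, rfl⟩
    exact Ico_subset_Icc_self (hθ i)
  · simp only [Finset.mem_insert, Finset.mem_image, Finset.mem_univ, true_and]
    rintro _ (rfl | ⟨i, rfl⟩)
    · exact hzero _ ⟨0, hd⟩ ((projCirc_periodic α).trans hα)
    · exact hzero _ i (hθP i)

/-- A binary form of degree `d` that splits as a product of `d` pairwise
non-proportional real linear forms has exactly `d` distinct real eigenvectors. -/
theorem eigenvectors_of_split_binary_form
    {d : ℕ} (hd : 1 ≤ d) (L : Fin d → ℝ × ℝ)
    (hL : ∀ i, L i ≠ 0)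
    (hprop : ∀ i j, i ≠ j → (L i).1 * (L j).2 - (L i).2 * (L j).1 ≠ 0)
    (f : MvPolynomial (Fin 2) ℝ)
    (hf : f = ∏ i : Fin d, (C (L i).1 * X 0 + C (L i).2 * X 1)) :
    (eigSet f).ncard = d := by
  obtain rfl : f = ∏ i, linForm (L i) := hf
  obtain ⟨hfin, hle⟩ := finite_projZeroSet_and_ncard_le
    ((isHomogeneous_prod_linForm L).angularDeriv hd) (rootVec_ne_zero (hL ⟨0, hd⟩))
    (eval_rootVec_angularDeriv_prod_linForm_ne_zero hL hprop ⟨0, hd⟩)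
  obtain ⟨α, s, hcard, hsub, hzero⟩ := exists_finset_zeros_circ_prod_linForm hd hL hprop
  have hge := card_le_ncard_projZeroSet_angularDeriv_add_one hsub hzero hfin
  rw [eigSet_eq_projZeroSet]
  omega
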